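/- arXiv:2005.12003 — 2 statements merged into one kernel-verified Lean document; each statement's English description precedes it below -/
import Mathlib

section
/- Let G be a finite group of the smallest order not belonging to the class F (of groups factorizable into two subsets for all factorizations of their order). Then G is a nonabelian simple group. -/
def IsFactorization {G : Type*} [Group G] (A B : Finset G) : Prop :=
  ∀ g : G, ∃! p : G × G, p.1 ∈ A ∧ p.2 ∈ B ∧ p.1 * p.2 = g

def InF (G : Type*) [Group G] : Prop :=
  ∀ a b : ℕ, a * b = Nat.card G →
    ∃ A B : Finset G, A.card = a ∧ B.card = b ∧ IsFactorization A B

/-- Groups of order 1 or prime order are in F. -/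
lemma inF_of_one_or_prime (G : Type*) [Group G] [Fintype G]
    (h : Nat.card G = 1 ∨ (Nat.card G).Prime) : InF G := by
  classical
  intro a b hab
  have hcases : a = 1 ∨ b = 1 := by
    have ha0 : 0 < a := by
      rcases Nat.eq_zero_or_pos a with h0 | h0
      · rw [h0, zero_mul] at hab
        have : 0 < Nat.card G := Nat.card_pos; omega
      · exact h0
    rcases h with h | h
    · rw [h] at hab
      exact Or.inl (Nat.eq_one_of_mul_eq_one_right hab)
    · rcases h.eq_one_or_self_of_dvd a ⟨b, hab.symm⟩ with h1 | h1
      · exact Or.inl h1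
      · right
        have : a * b = a * 1 := by rw [hab, h1, mul_one]
        exact Nat.eq_of_mul_eq_mul_left ha0 this
  have hb : (Finset.univ : Finset G).card = Nat.card G := by
    rw [Nat.card_eq_fintype_card, Finset.card_univ]
  rcases hcases with h1 | h1
  · refine ⟨{1}, Finset.univ, by simp [h1], by rw [hb, ← hab, h1, one_mul], ?_⟩
    intro g
    refine ⟨(1, g), ⟨by simp, by simp, by simp⟩, ?_⟩
    rintro ⟨x, y⟩ ⟨hx, _, hxy⟩
    simp only [Finset.mem_singleton] at hx
    subst hx
    simp only [one_mul] at hxy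
    simp [hxy]
  · refine ⟨Finset.univ, {1}, by rw [hb, ← hab, h1, mul_one], by simp [h1], ?_⟩
    intro g
    refine ⟨(g, 1), ⟨by simp, by simp, by simp⟩, ?_⟩
    rintro ⟨x, y⟩ ⟨_, hy, hxy⟩
    simp only [Finset.mem_singleton] at hy
    subst hy
    simp only [mul_one] at hxy
    simp [hxy]

/-- The four numbers lemma (Riesz interpolation for ℕ). -/
lemma four_numbers {a b m n : ℕ} (ha : 0 < a) (hm : 0 < m)
    (h : a * b = m * n) :
    ∃ a₁ a₂ b₁ b₂ : ℕ, a = a₁ * a₂ ∧ b = b₁ * b₂ ∧ m = a₁ * b₁ ∧ n = a₂ * b₂ := by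
  set g := Nat.gcd a m with hg
  have hg0 : 0 < g := Nat.gcd_pos_of_pos_left m ha
  have hga : g ∣ a := Nat.gcd_dvd_left a m
  have hgm : g ∣ m := Nat.gcd_dvd_right a m
  set a₂ := a / g with ha₂
  set b₁ := m / g with hb₁
  have haeq : a = g * a₂ := (Nat.mul_div_cancel' hga).symm
  have hmeq : m = g * b₁ := (Nat.mul_div_cancel' hgm).symm
  have ha₂0 : 0 < a₂ := Nat.div_pos (Nat.le_of_dvd ha hga) hg0
  have hcop : Nat.Coprime a₂ b₁ := Nat.coprime_div_gcd_div_gcd hg0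
  have key : a₂ * b = b₁ * n := by
    have : g * (a₂ * b) = g * (b₁ * n) := by
      rw [← mul_assoc, ← mul_assoc, ← haeq, ← hmeq, h]
    exact Nat.eq_of_mul_eq_mul_left hg0 this
  have hdvd : a₂ ∣ n := by
    have : a₂ ∣ b₁ * n := ⟨b, key.symm⟩
    exact (Nat.Coprime.dvd_of_dvd_mul_left hcop this)
  set b₂ := n / a₂ with hb₂
  have hneq : n = a₂ * b₂ := (Nat.mul_div_cancel' hdvd).symm
  refine ⟨g, a₂, b₁, b₂, by rw [← haeq], ?_, by rw [← hmeq], hneq⟩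
  have : a₂ * b = a₂ * (b₁ * b₂) := by
    rw [key, hneq]; ring
  exact Nat.eq_of_mul_eq_mul_left ha₂0 this

/-- If `N` is a normal subgroup with both `N` and `G ⧸ N` in F, then `G` is in F. -/
lemma inF_of_normal {G : Type*} [Group G] [Fintype G] (N : Subgroup G) [N.Normal]
    (hN : InF N) (hQ : InF (G ⧸ N)) : InF G := by
  classical
  intro a b hab
  have hcard : Nat.card G = Nat.card N * Nat.card (G ⧸ N) := by
    rw [Subgroup.card_eq_card_quotient_mul_card_subgroup N, mul_comm]
  have hG0 : 0 < Nat.card G := Nat.card_pos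
  have ha0 : 0 < a := by
    rcases Nat.eq_zero_or_pos a with h0 | h0
    · rw [h0, zero_mul] at hab; omega
    · exact h0
  have hN0 : 0 < Nat.card N := Nat.card_pos
  obtain ⟨a₁, a₂, b₁, b₂, haeq, hbeq, hmeq, hneq⟩ :=
    four_numbers ha0 hN0 (by rw [hab, hcard])
  obtain ⟨A₁, B₁, hA₁, hB₁, hfN⟩ := hN a₁ b₁ hmeq.symm
  obtain ⟨A₂, B₂, hA₂, hB₂, hfQ⟩ := hQ a₂ b₂ hneq.symm
  -- sections of the quotient map
  set s : G ⧸ N → G := Quotient.out with hs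
  have hsec : ∀ q : G ⧸ N, (s q : G ⧸ N) = q := fun q => QuotientGroup.out_eq' q
  set A : Finset G := (A₂ ×ˢ A₁).image (fun p => s p.1 * (p.2 : G)) with hA
  set B : Finset G := (B₁ ×ˢ B₂).image (fun p => (p.1 : G) * s p.2) with hB
  have memN_mk : ∀ x : N, ((x : G) : G ⧸ N) = 1 := fun x =>
    (QuotientGroup.eq_one_iff _).mpr x.2
  have hAinj : Set.InjOn (fun p : (G ⧸ N) × N => s p.1 * (p.2 : G))
      ((A₂ ×ˢ A₁ : Finset ((G ⧸ N) × N)) : Set ((G ⧸ N) × N)) := by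
    rintro ⟨q, x⟩ _ ⟨q', x'⟩ _ h
    simp only at h
    have hq : q = q' := by
      have := congrArg (QuotientGroup.mk (s := N)) h
      simpa [QuotientGroup.mk_mul, hsec, memN_mk] using this
    subst hq
    have hx : (x : G) = (x' : G) := by
      exact mul_left_cancel h
    exact Prod.ext rfl (Subtype.ext hx)
  have hBinj : Set.InjOn (fun p : N × (G ⧸ N) => (p.1 : G) * s p.2)
      ((B₁ ×ˢ B₂ : Finset (N × (G ⧸ N))) : Set (N × (G ⧸ N))) := by
    rintro ⟨x, q⟩ _ ⟨x', q'⟩ _ h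
    simp only at h
    have hq : q = q' := by
      have := congrArg (QuotientGroup.mk (s := N)) h
      simpa [QuotientGroup.mk_mul, hsec, memN_mk] using this
    subst hq
    have hx : (x : G) = (x' : G) := by
      exact mul_right_cancel h
    exact Prod.ext (Subtype.ext hx) rfl
  refine ⟨A, B, ?_, ?_, ?_⟩
  · rw [hA, Finset.card_image_of_injOn hAinj, Finset.card_product, hA₂, hA₁,
      haeq, Nat.mul_comm a₁ a₂]
  · rw [hB, Finset.card_image_of_injOn hBinj, Finset.card_product, hB₁, hB₂,
      hbeq]
  · intro g
    -- decompose the image of g in the quotient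
    obtain ⟨⟨q₂, r₂⟩, ⟨hq₂, hr₂, hqr⟩, huniqQ⟩ := hfQ (g : G ⧸ N)
    -- the middle element lies in N
    have hnmem : (s q₂)⁻¹ * g * (s r₂)⁻¹ ∈ N := by
      rw [← QuotientGroup.eq_one_iff]
      simp only [QuotientGroup.mk_mul, QuotientGroup.mk_inv, hsec]
      rw [← hqr]; group
    set n : N := ⟨(s q₂)⁻¹ * g * (s r₂)⁻¹, hnmem⟩ with hn
    obtain ⟨⟨x₁, y₁⟩, ⟨hx₁, hy₁, hxy⟩, huniqN⟩ := hfN n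
    refine ⟨(s q₂ * (x₁ : G), (y₁ : G) * s r₂), ⟨?_, ?_, ?_⟩, ?_⟩
    · exact Finset.mem_image.mpr ⟨(q₂, x₁), Finset.mem_product.mpr ⟨hq₂, hx₁⟩, rfl⟩
    · exact Finset.mem_image.mpr ⟨(y₁, r₂), Finset.mem_product.mpr ⟨hy₁, hr₂⟩, rfl⟩
    · have hval : ((x₁ * y₁ : N) : G) = (s q₂)⁻¹ * g * (s r₂)⁻¹ := by rw [hxy]
      push_cast at hval
      calc s q₂ * (x₁ : G) * ((y₁ : G) * s r₂)
          = s q₂ * ((x₁ : G) * (y₁ : G)) * s r₂ := by group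
        _ = s q₂ * ((s q₂)⁻¹ * g * (s r₂)⁻¹) * s r₂ := by rw [hval]
        _ = g := by group
    · rintro ⟨u, v⟩ ⟨hu, hv, huv⟩
      obtain ⟨⟨q, x⟩, hqx, hu'⟩ := Finset.mem_image.mp hu
      obtain ⟨⟨y, r⟩, hyr, hv'⟩ := Finset.mem_image.mp hv
      rw [Finset.mem_product] at hqx hyr
      simp only at hu' hv'
      have hquot : q * r = (g : G ⧸ N) := by
        have h1 : ((u * v : G) : G ⧸ N) = (g : G ⧸ N) := congrArg _ huv
        rw [← hu', ← hv'] at h1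
        simpa [QuotientGroup.mk_mul, hsec, memN_mk] using h1
      have hpair := huniqQ (q, r) ⟨hqx.1, hyr.2, hquot⟩
      have hq : q = q₂ := congrArg Prod.fst hpair
      have hr : r = r₂ := congrArg Prod.snd hpair
      rw [hq] at hu'
      rw [hr] at hv'
      have hguv : s q₂ * (x : G) * ((y : G) * s r₂) = g := by rw [hu', hv', huv]
      have hxyval : ((x * y : N) : G) = (s q₂)⁻¹ * g * (s r₂)⁻¹ := by
        push_cast
        rw [← hguv]; group
      have hnval : (x * y : N) = n := Subtype.ext (by rw [hxyval])
      have hNpair := huniqN (x, y) ⟨hqx.2, hyr.1, hnval⟩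
      have hx : x = x₁ := congrArg Prod.fst hNpair
      have hy : y = y₁ := congrArg Prod.snd hNpair
      rw [hx] at hu'
      rw [hy] at hv'
      exact Prod.ext hu'.symm hv'.symm

theorem minimal_counterexample_simple (G : Type) [Group G] [Fintype G]
    (hG : ¬ InF G)
    (hmin : ∀ (H : Type) [Group H] [Fintype H],
      Nat.card H < Nat.card G → InF H) :
    IsSimpleGroup G ∧ ∃ x y : G, x * y ≠ y * x := by
  classical
  have hG0 : 0 < Nat.card G := Nat.card_pos
  have hcard1 : Nat.card G ≠ 1 := by
    intro h
    exact hG (inF_of_one_or_prime G (Or.inl h))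
  have hnt : Nontrivial G := by
    rw [← Finite.one_lt_card_iff_nontrivial]
    omega
  have hsimple : IsSimpleGroup G := by
    by_contra hns
    have hex : ∃ N : Subgroup G, N.Normal ∧ N ≠ ⊥ ∧ N ≠ ⊤ := by
      by_contra h'
      push_neg at h'
      exact hns ⟨fun N hN => by
        by_cases hb : N = ⊥
        · exact Or.inl hb
        · exact Or.inr (h' N hN hb)⟩
    obtain ⟨N, hNnorm, hNbot, hNtop⟩ := hex
    haveI := hNnorm
    have hcard : Nat.card G = Nat.card (G ⧸ N) * Nat.card N :=
      Subgroup.card_eq_card_quotient_mul_card_subgroup N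
    have hNnt : Nontrivial N := by
      rcases N.bot_or_nontrivial with h | h
      · exact absurd h hNbot
      · exact h
    have hQnt : Nontrivial (G ⧸ N) := by
      obtain ⟨g, hg⟩ : ∃ g : G, g ∉ N := by
        by_contra h'
        push_neg at h'
        exact hNtop (Subgroup.eq_top_iff' N |>.mpr h')
      exact ⟨(g : G ⧸ N), 1, by
        rw [Ne, QuotientGroup.eq_one_iff]
        exact hg⟩
    have hN2 : 1 < Nat.card N := Finite.one_lt_card_iff_nontrivial.mpr hNnt
    have hQ2 : 1 < Nat.card (G ⧸ N) := Finite.one_lt_card_iff_nontrivial.mpr hQnt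
    have hNlt : Nat.card N < Nat.card G := by
      rw [hcard]; nlinarith [hN2, hQ2]
    have hQlt : Nat.card (G ⧸ N) < Nat.card G := by
      rw [hcard]; nlinarith [hN2, hQ2]
    haveI : Fintype N := Fintype.ofFinite _
    haveI : Fintype (G ⧸ N) := Fintype.ofFinite _
    exact hG (inF_of_normal N (hmin N hNlt) (hmin (G ⧸ N) hQlt))
  refine ⟨hsimple, ?_⟩
  by_contra hcomm
  push_neg at hcomm
  letI : CommGroup G := { (inferInstance : Group G) with mul_comm := hcomm }
  have hp : (Nat.card G).Prime := IsSimpleGroup.prime_card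
  exact hG (inF_of_one_or_prime G (Or.inr hp))
end

section
/- The alternating group A₅ belongs to the class F: for every factorization 60 = a·b there exist subsets A, B ⊆ A₅ with |A| = a, |B| = b, and A₅ = AB as a unique-product factorization. -/
open Finset Pointwise

def HasFactorization (G : Type*) [Group G] (a b : ℕ) : Prop :=
  ∃ A B : Finset G, #A = a ∧ #B = b ∧ IsFactorization A B

def InClassF (G : Type*) [Group G] : Prop :=
  ∀ a b : ℕ, a * b = Nat.card G → HasFactorization G a b

section Factorization

variable {G : Type*} [Group G]

theorem IsFactorization.inv [DecidableEq G] {A B : Finset G} (h : IsFactorization A B) :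
    IsFactorization B⁻¹ A⁻¹ := by
  intro g
  obtain ⟨⟨a, b⟩, ⟨ha, hb, hab⟩, huniq⟩ := h g⁻¹
  refine ⟨(b⁻¹, a⁻¹), ⟨by simpa using hb, by simpa using ha, ?_⟩, ?_⟩
  · rw [← mul_inv_rev, hab, inv_inv]
  rintro ⟨y, x⟩ ⟨hy, hx, hyx⟩
  have := huniq (x⁻¹, y⁻¹) ⟨mem_inv'.1 hx, mem_inv'.1 hy, by rw [← mul_inv_rev, ← hyx]⟩
  simp only [Prod.ext_iff] at this ⊢
  simp [← this.1, ← this.2]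

theorem HasFactorization.symm {a b : ℕ} (h : HasFactorization G a b) :
    HasFactorization G b a := by
  classical
  obtain ⟨A, B, hA, hB, hAB⟩ := h
  exact ⟨B⁻¹, A⁻¹, by rw [card_inv, hB], by rw [card_inv, hA], hAB.inv⟩

theorem hasFactorization_one_card [Finite G] : HasFactorization G 1 (Nat.card G) := by
  have := Fintype.ofFinite G
  refine ⟨{1}, univ, card_singleton 1, (Nat.card_eq_fintype_card).symm, fun g => ?_⟩
  refine ⟨(1, g), ⟨mem_singleton_self 1, mem_univ g, one_mul g⟩, ?_⟩
  rintro ⟨x, y⟩ ⟨hx, -, rfl⟩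
  obtain rfl : x = 1 := mem_singleton.1 hx
  simp

theorem Subgroup.IsComplement.eq_and_eq_of_mul_eq_mul {T : Set G} {H : Subgroup G}
    (hT : IsComplement T H) {t t' h h' : G} (ht : t ∈ T) (ht' : t' ∈ T) (hh : h ∈ H)
    (hh' : h' ∈ H) (e : t * h = t' * h') : t = t' ∧ h = h' := by
  have := hT.1 (a₁ := (⟨t, ht⟩, ⟨h, hh⟩)) (a₂ := (⟨t', ht'⟩, ⟨h', hh'⟩)) e
  simp only [Prod.ext_iff, Subtype.ext_iff] at this
  exact this

variable {H : Subgroup G} {T : Finset G}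

theorem Subgroup.IsComplement.card_mul_finset_map [DecidableEq G]
    (hT : IsComplement (T : Set G) H) (A : Finset H) :
    #(T * A.map (Function.Embedding.subtype _)) = #T * #A := by
  rw [card_mul_iff.2, card_map]
  rintro ⟨t, a⟩ ⟨ht, ha⟩ ⟨t', a'⟩ ⟨ht', ha'⟩ e
  obtain ⟨a, -, rfl⟩ := Finset.mem_map.1 (mem_coe.1 ha)
  obtain ⟨a', -, rfl⟩ := Finset.mem_map.1 (mem_coe.1 ha')
  exact Prod.ext_iff.2 (hT.eq_and_eq_of_mul_eq_mul ht ht' a.2 a'.2 e)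

theorem IsFactorization.of_isComplement [DecidableEq G]
    (hT : Subgroup.IsComplement (T : Set G) H) {A B : Finset H} (hAB : IsFactorization A B) :
    IsFactorization (T * A.map (Function.Embedding.subtype _))
      (B.map (Function.Embedding.subtype _)) := by
  intro g
  obtain ⟨⟨⟨t, ht⟩, h⟩, rfl, -⟩ := hT.existsUnique g
  obtain ⟨⟨a, b⟩, ⟨ha, hb, rfl⟩, huniq⟩ := hAB h
  refine ⟨(t * a, b), ⟨mul_mem_mul ht (mem_map_of_mem _ ha), mem_map_of_mem _ hb, ?_⟩, ?_⟩
  · simp [mul_assoc]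
  rintro ⟨x, y⟩ ⟨hx, hy, hxy⟩
  obtain ⟨t', ht', _, ha'', rfl⟩ := mem_mul.1 hx
  obtain ⟨a', ha', rfl⟩ := mem_map.1 ha''
  obtain ⟨b', hb', rfl⟩ := mem_map.1 hy
  simp only [Function.Embedding.coe_subtype, mul_assoc, Subgroup.coe_mul] at hxy
  obtain ⟨rfl, hab'⟩ := hT.eq_and_eq_of_mul_eq_mul ht' ht (mul_mem a'.2 b'.2) (mul_mem a.2 b.2) hxy
  obtain ⟨rfl, rfl⟩ := Prod.ext_iff.1 (huniq (a', b') ⟨ha', hb', Subtype.ext hab'⟩)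
  rfl

theorem HasFactorization.of_subgroup [Finite G] (H : Subgroup G) {a b : ℕ}
    (h : HasFactorization H a b) : HasFactorization G (H.index * a) b := by
  classical
  obtain ⟨A, B, rfl, rfl, hAB⟩ := h
  obtain ⟨T, hT, -⟩ := H.exists_isComplement_left 1
  lift T to Finset G using T.toFinite
  refine ⟨T * A.map (Function.Embedding.subtype _), B.map (Function.Embedding.subtype _), ?_,
    card_map _, hAB.of_isComplement hT⟩
  rw [hT.card_mul_finset_map, ← hT.ncard_left, Set.ncard_coe_finset]

theorem Subgroup.hasFactorization_index_card [Finite G] (H : Subgroup G) :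
    HasFactorization G H.index (Nat.card H) := by
  simpa using hasFactorization_one_card.of_subgroup H

theorem hasFactorization_prime_pow [Finite G] {p n b : ℕ} [Fact p.Prime]
    (h : p ^ n * b = Nat.card G) : HasFactorization G (p ^ n) b := by
  obtain ⟨K, hK⟩ := Sylow.exists_subgroup_card_pow_prime p ⟨b, h.symm⟩
  have hindex : K.index = b := by
    refine Nat.eq_of_mul_eq_mul_left (pow_pos (Fact.out : p.Prime).pos n) ?_
    rw [h, ← hK, Subgroup.card_mul_index]
  simpa [hK, hindex] using K.hasFactorization_index_card.symm

theorem InClassF.of_exists_prime_pow [Finite G]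
    (h : ∀ a b, a * b = Nat.card G → ∃ p n, p.Prime ∧ (a = p ^ n ∨ b = p ^ n)) :
    InClassF G := by
  intro a b hab
  obtain ⟨p, n, hp, rfl | rfl⟩ := h a b hab
  · have := Fact.mk hp
    exact hasFactorization_prime_pow hab
  · have := Fact.mk hp
    exact (hasFactorization_prime_pow ((mul_comm _ _).trans hab)).symm

theorem InClassF.of_index_prime [Finite G] (H : Subgroup G) (hp : H.index.Prime)
    (hH : InClassF H) : InClassF G := by
  intro a b hab
  rw [← H.index_mul_card] at hab
  rcases (Nat.Prime.dvd_mul hp).1 (Dvd.intro _ hab.symm) with ⟨a', rfl⟩ | ⟨b', rfl⟩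
  · exact (hH a' b (Nat.eq_of_mul_eq_mul_left hp.pos (by rw [← hab, mul_assoc]))).of_subgroup H
  · refine ((hH b' a (Nat.eq_of_mul_eq_mul_left hp.pos ?_)).of_subgroup H).symm
    rw [← hab, mul_comm a, mul_assoc]

end Factorization

theorem exists_prime_pow_of_mul_eq_twelve {a b : ℕ} (h : a * b = 12) :
    ∃ p n, p.Prime ∧ (a = p ^ n ∨ b = p ^ n) := by
  have ha : a ∈ Nat.divisors 12 := Nat.mem_divisors.2 ⟨Dvd.intro b h, by norm_num⟩
  have hb : b = 12 / a := (Nat.div_eq_of_eq_mul_right (Nat.pos_of_mem_divisors ha) h.symm).symm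
  subst hb
  fin_cases ha
  exacts [⟨2, 0, Nat.prime_two, by norm_num⟩, ⟨2, 1, Nat.prime_two, by norm_num⟩,
    ⟨3, 1, Nat.prime_three, by norm_num⟩, ⟨2, 2, Nat.prime_two, by norm_num⟩,
    ⟨2, 1, Nat.prime_two, by norm_num⟩, ⟨2, 0, Nat.prime_two, by norm_num⟩]

theorem InClassF.of_card_eq_twelve {G : Type*} [Group G] (hG : Nat.card G = 12) : InClassF G :=
  have : Finite G := Nat.finite_of_card_ne_zero (by omega)
  InClassF.of_exists_prime_pow fun _ _ h => exists_prime_pow_of_mul_eq_twelve (h.trans hG)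

theorem alternatingGroup.index_stabilizer {α : Type*} [Fintype α] [DecidableEq α]
    (h : 3 ≤ Nat.card α) (x : α) :
    (MulAction.stabilizer (alternatingGroup α) x).index = Nat.card α :=
  have := alternatingGroup.isPretransitive_of_three_le_card α h
  MulAction.index_stabilizer_of_transitive _ x

theorem alternatingGroup_five_card : Nat.card (alternatingGroup (Fin 5)) = 60 := by
  rw [nat_card_alternatingGroup, Nat.card_fin]
  rfl

theorem alternatingGroup_five_card_stabilizer (x : Fin 5) :
    Nat.card (MulAction.stabilizer (alternatingGroup (Fin 5)) x) = 12 := by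
  have := (MulAction.stabilizer (alternatingGroup (Fin 5)) x).index_mul_card
  rw [alternatingGroup.index_stabilizer (by simp), alternatingGroup_five_card, Nat.card_fin] at this
  omega

theorem alternatingGroup_five_inF :
    ∀ a b : ℕ, a * b = 60 →
      ∃ A B : Finset (alternatingGroup (Fin 5)), A.card = a ∧ B.card = b ∧
        IsFactorization A B := by
  intro a b hab
  let A4 := MulAction.stabilizer (alternatingGroup (Fin 5)) (0 : Fin 5)
  have hA4 : InClassF A4 := InClassF.of_card_eq_twelve (alternatingGroup_five_card_stabilizer 0)
  have hindex : A4.index.Prime := by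
    rw [alternatingGroup.index_stabilizer (by simp), Nat.card_fin]
    norm_num
  exact hA4.of_index_prime A4 hindex a b (hab.trans alternatingGroup_five_card.symm)
end
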